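/- arXiv:1905.07449 — 6 statements merged into one kernel-verified Lean document; each statement's English description precedes it below -/
import Mathlib

section
/- The vector π defined by the matrix-tree formula π_k = (∑_T w(T_k))/(∑_{l=1}^N ∑_T w(T_l)) (sums over all spanning trees T of G) is strictly positive and is the unique probability distribution satisfying ∑_{j=1}^N W_kj π_j = 0 for every state k. -/
open Finset

attribute [local instance] Classical.propDecidable

/-- The transition graph of a rate matrix: an edge between `i ≠ j` whenever
both rates are positive. -/
def transGraph {V : Type*} (W : V → V → ℝ) : SimpleGraph V where
  Adj i j := i ≠ j ∧ 0 < W i j ∧ 0 < W j i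
  symm := ⟨fun i j ⟨h, h1, h2⟩ => ⟨h.symm, h2, h1⟩⟩
  loopless := ⟨fun i ⟨h, _, _⟩ => h rfl⟩

/-- `T` is a spanning tree of `G`. -/
def IsSpanningTree {V : Type*} (G T : SimpleGraph V) : Prop := T ≤ G ∧ T.IsTree

/-- Weight of spanning tree `T` rooted at `r`: product over the edges of `T`,
each directed towards `r`, of the corresponding rate (`W i j` is the rate of
the jump `j → i`). -/
noncomputable def treeWeight {V : Type*} [Fintype V] (W : V → V → ℝ)
    (T : SimpleGraph V) (r : V) : ℝ :=
  ∏ p ∈ Finset.univ.filter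
      (fun p : V × V => T.Adj p.1 p.2 ∧ T.dist p.2 r + 1 = T.dist p.1 r),
    W p.2 p.1

/-- Sum of rooted-tree weights over all spanning trees of `G`, rooted at `k`. -/
noncomputable def sumTrees {V : Type*} [Fintype V] [DecidableEq V] (W : V → V → ℝ)
    (G : SimpleGraph V) (k : V) : ℝ :=
  ∑ T ∈ Finset.univ.filter (fun T : SimpleGraph V => IsSpanningTree G T),
    treeWeight W T k

/-- Steady state via matrix-tree formula. -/
noncomputable def mttPi {V : Type*} [Fintype V] [DecidableEq V] (W : V → V → ℝ)
    (G : SimpleGraph V) (k : V) : ℝ :=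
  sumTrees W G k / ∑ l : V, sumTrees W G l

/-- Weight of a walk: product of the rates of its directed edges
(a step `a → b` has rate `W b a`). -/
noncomputable def walkWeight {V : Type*} (W : V → V → ℝ) {G : SimpleGraph V} {u v : V}
    (p : G.Walk u v) : ℝ :=
  (p.darts.map (fun d => W d.snd d.fst)).prod

/-- Cycle force of a closed walk. -/
noncomputable def cycleForce {V : Type*} (W : V → V → ℝ) {G : SimpleGraph V} {u : V}
    (p : G.Walk u u) : ℝ :=
  Real.log (walkWeight W p / walkWeight W p.reverse)

/-- `Fmax`: the maximum of `|F_C|` over cycles `C` of `G` containing the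
edge `{m,n}`; `0` if there is none. -/
noncomputable def Fmax {V : Type*} (W : V → V → ℝ) (G : SimpleGraph V) (m n : V) : ℝ :=
  sSup {x : ℝ | ∃ (u : V) (p : G.Walk u u), p.IsCycle ∧ s(m, n) ∈ p.edges ∧
    x = |cycleForce W p|}

/-- `F_{i↔j}`: the maximum entropy produced going from `i` to `j` and back
along non-self-intersecting paths. -/
noncomputable def Fbtw {V : Type*} (W : V → V → ℝ) (G : SimpleGraph V) (i j : V) : ℝ :=
  sSup {x : ℝ | ∃ (p : G.Walk i j) (q : G.Walk j i), p.IsPath ∧ q.IsPath ∧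
    x = |Real.log (walkWeight W p * walkWeight W q /
          (walkWeight W p.reverse * walkWeight W q.reverse))|}

/-- The parameterized rates `W_ij = exp(-(B_ij - E_j - F_ij/2))` on the edges of `G`. -/
noncomputable def rates {V : Type*} (G : SimpleGraph V) (Bp : V → V → ℝ) (Ep : V → ℝ)
    (Fp : V → V → ℝ) : V → V → ℝ :=
  fun i j => if G.Adj i j then Real.exp (-(Bp i j - Ep j - Fp i j / 2)) else 0

/-- Steady state as a function of the parameters. -/
noncomputable def piP {V : Type*} [Fintype V] [DecidableEq V] (G : SimpleGraph V)
    (Bp : V → V → ℝ) (Ep : V → ℝ) (Fp : V → V → ℝ) (k : V) : ℝ :=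
  mttPi (rates G Bp Ep Fp) G k

/-- Replace the symmetric edge parameter of the edge `{m,n}` by `t`. -/
noncomputable def updB {V : Type*} (Bp : V → V → ℝ) (m n : V) (t : ℝ) : V → V → ℝ :=
  fun i j => if (i = m ∧ j = n) ∨ (i = n ∧ j = m) then t else Bp i j

/-- Add `t` to the symmetric edge parameters of all edges in `S`. -/
noncomputable def updBadd {V : Type*} (Bp : V → V → ℝ) (S : Set (Sym2 V)) (t : ℝ) : V → V → ℝ :=
  fun i j => if s(i, j) ∈ S then Bp i j + t else Bp i j

/-- Replace the antisymmetric edge parameter of the edge `{i,j}` by `t`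
(and by `-t` in the reverse direction). -/
noncomputable def updF {V : Type*} (Fp : V → V → ℝ) (i j : V) (t : ℝ) : V → V → ℝ :=
  fun a b => if a = i ∧ b = j then t else if a = j ∧ b = i then -t else Fp a b

/-- The full rate matrix, with diagonal entries fixed by conservation of probability. -/
noncomputable def fullW {V : Type*} [Fintype V] [DecidableEq V] (W : V → V → ℝ) :
    V → V → ℝ :=
  fun i j => if i = j then -∑ l ∈ Finset.univ.filter (fun l => l ≠ j), W l j else W i j


/-!
A spanning tree rooted at `r` is the same as a parent map `g : V → V` with `g r = r` whose
orbits all reach `r`; its weight is `∏_{v ≠ r} W (g v) v`. Writing `S_k` for the sum of the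
weights of the trees rooted at `k`, stationarity of `π ∝ S` is the balance
`∑_{j ~ k} W_kj S_j = (∑_{i ~ k} W_ik) S_k`. Both sides enumerate, with weight
`∏_v W (f v) v`, the maps `f` along the edges whose functional graph has a single cycle, passing
through `k`: on the left a tree rooted at `j` is closed by the edge `j → k`, on the right the
root `k` of a tree is sent to a neighbour `i`. Every tree of `G` has positive weight, so `π > 0`.
For uniqueness, if `p` is stationary then `p / π` satisfies a maximum principle: the set where it
is maximal is closed under the edges of the connected graph `G`, so `p / π` is constant.
-/

namespace MarkovChainTree

open SimpleGraph Function

variable {V : Type*}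

section HitTime

variable {g : V → V} {r v : V}

/-- `0` if the orbit of `v` never reaches `r`. -/
noncomputable def hitTime (g : V → V) (r v : V) : ℕ := sInf {n | g^[n] v = r}

lemma iterate_hitTime (h : ∃ n, g^[n] v = r) : g^[hitTime g r v] v = r :=
  Nat.sInf_mem h

lemma iterate_ne_of_lt_hitTime {l : ℕ} (hl : l < hitTime g r v) : g^[l] v ≠ r :=
  Nat.notMem_of_lt_sInf hl

lemma hitTime_eq {n : ℕ} (hn : g^[n] v = r) (hmin : ∀ l < n, g^[l] v ≠ r) :
    hitTime g r v = n :=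
  le_antisymm (Nat.sInf_le hn) (not_lt.1 fun hlt => hmin _ hlt (iterate_hitTime ⟨n, hn⟩))

lemma hitTime_self : hitTime g r r = 0 :=
  hitTime_eq rfl fun _ h => absurd h (Nat.not_lt_zero _)

lemma hitTime_pos (h : ∃ n, g^[n] v = r) (hv : v ≠ r) : 0 < hitTime g r v :=
  Nat.pos_of_ne_zero fun h0 => hv (by simpa [h0] using iterate_hitTime h)

lemma hitTime_eq_succ (h : ∃ n, g^[n] v = r) (hv : v ≠ r) :
    hitTime g r v = hitTime g r (g v) + 1 := by
  obtain ⟨m, hm⟩ := Nat.exists_eq_succ_of_ne_zero (hitTime_pos h hv).ne'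
  have hgv : hitTime g r (g v) = m := by
    refine hitTime_eq ?_ fun l hl => ?_
    · rw [← iterate_succ_apply, ← hm, iterate_hitTime h]
    · rw [← iterate_succ_apply]
      exact iterate_ne_of_lt_hitTime (by omega)
  omega

lemma exists_iterate_eq_of_map_lt (φ : V → ℕ) (hφ : ∀ v, v ≠ r → φ (g v) < φ v) (v : V) :
    ∃ n, g^[n] v = r := by
  induction hv : φ v using Nat.strong_induction_on generalizing v with
  | _ m ih =>
    by_cases hvr : v = r
    · exact ⟨0, hvr⟩
    · obtain ⟨n, hn⟩ := ih _ (hv ▸ hφ v hvr) (g v) rfl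
      exact ⟨n + 1, by rwa [iterate_succ_apply]⟩

variable [DecidableEq V]

lemma iterate_update_of_forall_ne {a b : V} {n : ℕ} (hn : ∀ l < n, g^[l] v ≠ a) :
    (update g a b)^[n] v = g^[n] v := by
  induction n with
  | zero => rfl
  | succ n ih =>
    rw [iterate_succ_apply', iterate_succ_apply', ih fun l hl => hn l (by omega),
      update_of_ne (hn n (by omega))]

lemma iterate_update_hitTime {b : V} (h : ∃ n, g^[n] v = r) :
    (update g r b)^[hitTime g r v] v = r := by
  rw [iterate_update_of_forall_ne fun _ => iterate_ne_of_lt_hitTime, iterate_hitTime h]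

end HitTime

section ParentMap

variable {G : SimpleGraph V} {r : V} {g : V → V}

/-- A spanning tree of `G` oriented towards the root `r`, encoded by the map sending each
vertex to the next vertex on its way to `r`. -/
structure IsParentMap (G : SimpleGraph V) (r : V) (g : V → V) : Prop where
  apply_root : g r = r
  adj_apply : ∀ v, v ≠ r → G.Adj v (g v)
  exists_iterate_eq : ∀ v, ∃ n, g^[n] v = r

def parentGraph (r : V) (g : V → V) : SimpleGraph V :=
  SimpleGraph.fromRel fun a b => a ≠ r ∧ g a = b

lemma parentGraph_adj {a b : V} :
    (parentGraph r g).Adj a b ↔ a ≠ b ∧ (a ≠ r ∧ g a = b ∨ b ≠ r ∧ g b = a) :=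
  SimpleGraph.fromRel_adj _ a b

lemma IsParentMap.mono {G' : SimpleGraph V} (hg : IsParentMap G r g) (hle : G ≤ G') :
    IsParentMap G' r g :=
  ⟨hg.apply_root, fun v hv => hle (hg.adj_apply v hv), hg.exists_iterate_eq⟩

namespace IsParentMap

variable (hg : IsParentMap G r g)
include hg

lemma parentGraph_adj_apply {v : V} (hv : v ≠ r) : (parentGraph r g).Adj v (g v) :=
  parentGraph_adj.2 ⟨(hg.adj_apply v hv).ne, Or.inl ⟨hv, rfl⟩⟩

lemma parentGraph_le : parentGraph r g ≤ G := by
  intro a b hab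
  rcases (parentGraph_adj.1 hab).2 with ⟨ha, rfl⟩ | ⟨hb, rfl⟩
  exacts [hg.adj_apply a ha, (hg.adj_apply b hb).symm]

lemma hitTime_eq_succ {v : V} (hv : v ≠ r) : hitTime g r v = hitTime g r (g v) + 1 :=
  MarkovChainTree.hitTime_eq_succ (hg.exists_iterate_eq v) hv

lemma iterate_ne_self {v : V} (hv : v ≠ r) {l : ℕ} (hl : 0 < l) : g^[l] v ≠ v := by
  intro hper
  obtain ⟨n, hn⟩ := hg.exists_iterate_eq v
  have hnl : n ≤ l * n := Nat.le_mul_of_pos_left n hl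
  have := (IsPeriodicPt.mul_const hper n).eq
  rw [← Nat.sub_add_cancel hnl, iterate_add_apply, hn, iterate_fixed hg.apply_root] at this
  exact hv this.symm

lemma exists_walk_length_eq_hitTime (v : V) :
    ∃ p : (parentGraph r g).Walk v r, p.length = hitTime g r v := by
  induction hv : hitTime g r v using Nat.strong_induction_on generalizing v with
  | _ n ih =>
    by_cases hvr : v = r
    · subst hvr
      exact ⟨.nil, by rw [← hv, hitTime_self]; rfl⟩
    · have hsucc := hg.hitTime_eq_succ hvr
      obtain ⟨p, hp⟩ := ih _ (by omega) (g v) rfl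
      exact ⟨.cons (hg.parentGraph_adj_apply hvr) p, by rw [Walk.length_cons, hp]; omega⟩

lemma parentGraph_connected : (parentGraph r g).Connected :=
  (connected_iff_exists_forall_reachable _).2
    ⟨r, fun v => (hg.exists_walk_length_eq_hitTime v).elim fun p _ => ⟨p.reverse⟩⟩

lemma hitTime_le_length_add {a b : V} (p : (parentGraph r g).Walk a b) :
    hitTime g r a ≤ p.length + hitTime g r b := by
  induction p with
  | nil => simp
  | cons hadj p ih =>
    rw [Walk.length_cons]
    rcases (parentGraph_adj.1 hadj).2 with ⟨ha, rfl⟩ | ⟨hb, rfl⟩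
    · have := hg.hitTime_eq_succ ha
      omega
    · have := hg.hitTime_eq_succ hb
      omega

lemma parentGraph_dist (v : V) : (parentGraph r g).dist v r = hitTime g r v := by
  obtain ⟨p, hp⟩ := hg.exists_walk_length_eq_hitTime v
  obtain ⟨q, hq⟩ := (hg.parentGraph_connected.preconnected v r).exists_walk_length_eq_dist
  have := hg.hitTime_le_length_add q
  rw [hitTime_self] at this
  have := dist_le p
  omega

lemma edgeSet_parentGraph :
    (parentGraph r g).edgeSet = Set.range fun v : {v // v ≠ r} => s(v.1, g v.1) := by
  ext e
  induction e using Sym2.ind with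
  | _ a b =>
    rw [mem_edgeSet, Set.mem_range]
    constructor
    · intro hab
      rcases (parentGraph_adj.1 hab).2 with ⟨ha, rfl⟩ | ⟨hb, rfl⟩
      exacts [⟨⟨a, ha⟩, rfl⟩, ⟨⟨b, hb⟩, Sym2.eq_swap⟩]
    · rintro ⟨⟨v, hv⟩, hvab⟩
      rcases Sym2.eq_iff.1 hvab with ⟨rfl, rfl⟩ | ⟨rfl, rfl⟩
      exacts [hg.parentGraph_adj_apply hv, (hg.parentGraph_adj_apply hv).symm]

lemma injective_edge : Injective fun v : {v // v ≠ r} => s(v.1, g v.1) := by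
  rintro ⟨a, ha⟩ ⟨b, hb⟩ hab
  rcases Sym2.eq_iff.1 hab with ⟨h, -⟩ | ⟨rfl, hgb⟩
  · exact Subtype.ext h
  · exact absurd hgb (hg.iterate_ne_self hb two_pos)

lemma parentGraph_isTree [Fintype V] [DecidableEq V] : (parentGraph r g).IsTree := by
  rw [isTree_iff_connected_and_card, hg.edgeSet_parentGraph,
    Nat.card_range_of_injective hg.injective_edge, Nat.card_eq_fintype_card,
    Nat.card_eq_fintype_card, Fintype.card_subtype_compl, Fintype.card_subtype_eq]
  have := Fintype.card_pos_iff.2 ⟨r⟩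
  exact ⟨hg.parentGraph_connected, by omega⟩

end IsParentMap

end ParentMap

section Tree

variable {G T : SimpleGraph V} {r : V}

lemma ne_of_dist_add_one_eq {u v : V} (h : G.dist u r + 1 = G.dist v r) : v ≠ r := by
  rintro rfl
  simp at h

lemma exists_adj_dist_add_one_eq (hc : G.Connected) {v : V} (hv : v ≠ r) :
    ∃ u, G.Adj v u ∧ G.dist u r + 1 = G.dist v r := by
  obtain ⟨p, hp⟩ := hc.exists_walk_length_eq_dist v r
  obtain ⟨u, hvu, q, rfl⟩ := Walk.exists_eq_cons_of_ne hv p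
  rw [Walk.length_cons] at hp
  obtain ⟨q', hq'⟩ := hc.exists_walk_length_eq_dist u r
  have := dist_le q
  have := dist_le (Walk.cons hvu q')
  rw [Walk.length_cons] at this
  exact ⟨u, hvu, by omega⟩

noncomputable def parent (G : SimpleGraph V) (r v : V) : V :=
  if h : ∃ u, G.Adj v u ∧ G.dist u r + 1 = G.dist v r then h.choose else r

lemma parent_spec {v : V} (h : ∃ u, G.Adj v u ∧ G.dist u r + 1 = G.dist v r) :
    G.Adj v (parent G r v) ∧ G.dist (parent G r v) r + 1 = G.dist v r := by
  rw [parent, dif_pos h]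
  exact h.choose_spec

lemma parent_self : parent G r r = r :=
  dif_neg fun ⟨_, _, h⟩ => ne_of_dist_add_one_eq h rfl

lemma isParentMap_parent (hc : G.Connected) (r : V) : IsParentMap G r (parent G r) where
  apply_root := parent_self
  adj_apply _ hv := (parent_spec (exists_adj_dist_add_one_eq hc hv)).1
  exists_iterate_eq := exists_iterate_eq_of_map_lt (G.dist · r) fun _ hv => by
    have := (parent_spec (exists_adj_dist_add_one_eq hc hv)).2
    omega

/-- The edges `v → u` and `v → u'` start two paths from `v` to `r`, which must coincide. -/
lemma eq_of_adj_of_dist_add_one_eq (hT : T.IsTree) {v u u' : V} (hu : T.Adj v u)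
    (hu' : T.Adj v u') (hdu : T.dist u r + 1 = T.dist v r)
    (hdu' : T.dist u' r + 1 = T.dist v r) : u = u' := by
  classical
  have hpath : ∀ u, T.Adj v u → T.dist u r + 1 = T.dist v r → ∃ p : T.Path v r, p.1.snd = u := by
    intro u hu hdu
    obtain ⟨q, hq, hql⟩ := (hT.connected.preconnected u r).exists_path_of_dist
    have hv : v ∉ q.support := fun hv => by
      have := dist_le (q.dropUntil v hv)
      have := q.length_dropUntil_le_length hv
      omega
    exact ⟨⟨.cons hu q, hq.cons hv⟩, Walk.snd_cons q hu⟩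
  obtain ⟨p, rfl⟩ := hpath u hu hdu
  obtain ⟨p', rfl⟩ := hpath u' hu' hdu'
  rw [(hT.isAcyclic.subsingleton_path v r).elim p p']

lemma eq_parent_of_adj (hT : T.IsTree) {v u : V} (hadj : T.Adj v u)
    (hd : T.dist u r + 1 = T.dist v r) : u = parent T r v :=
  have hspec := parent_spec ⟨u, hadj, hd⟩
  eq_of_adj_of_dist_add_one_eq hT hadj hspec.1 hd hspec.2

lemma parentGraph_parent_adj (hT : T.IsTree) {a b : V} (hab : T.Adj a b)
    (hd : T.dist b r + 1 = T.dist a r) : (parentGraph r (parent T r)).Adj a b :=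
  parentGraph_adj.2 ⟨hab.ne, .inl ⟨ne_of_dist_add_one_eq hd, (eq_parent_of_adj hT hab hd).symm⟩⟩

lemma parentGraph_parent (hT : T.IsTree) (r : V) : parentGraph r (parent T r) = T := by
  refine le_antisymm (isParentMap_parent hT.connected r).parentGraph_le fun a b hab => ?_
  have hdist := hT.dist_eq_dist_add_one_of_adj r hab
  rw [SimpleGraph.dist_comm (u := r), SimpleGraph.dist_comm (u := r)] at hdist
  rcases hdist with h | h
  · exact parentGraph_parent_adj hT hab h.symm
  · exact (parentGraph_parent_adj hT hab.symm h.symm).symm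

variable [Fintype V] [DecidableEq V]

lemma parent_parentGraph {g : V → V} (hg : IsParentMap G r g) : parent (parentGraph r g) r = g := by
  funext v
  by_cases hv : v = r
  · rw [hv, parent_self, hg.apply_root]
  · refine (eq_parent_of_adj hg.parentGraph_isTree (hg.parentGraph_adj_apply hv) ?_).symm
    rw [hg.parentGraph_dist, hg.parentGraph_dist, hg.hitTime_eq_succ hv]

noncomputable def parentMapWeight (W : V → V → ℝ) (r : V) (g : V → V) : ℝ :=
  ∏ v ∈ univ.erase r, W (g v) v

lemma treeWeight_eq_parentMapWeight (W : V → V → ℝ) (hT : T.IsTree) (r : V) :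
    treeWeight W T r = parentMapWeight W r (parent T r) := by
  have hfilter : univ.filter (fun p : V × V => T.Adj p.1 p.2 ∧ T.dist p.2 r + 1 = T.dist p.1 r)
      = (univ.erase r).image fun v => (v, parent T r v) := by
    ext ⟨a, b⟩
    simp only [mem_filter, mem_univ, true_and, mem_image, mem_erase, Prod.mk.injEq]
    constructor
    · rintro ⟨hab, hd⟩
      exact ⟨a, ⟨ne_of_dist_add_one_eq hd, trivial⟩, rfl, (eq_parent_of_adj hT hab hd).symm⟩
    · rintro ⟨v, ⟨hv, -⟩, rfl, rfl⟩
      exact parent_spec (exists_adj_dist_add_one_eq hT.connected hv)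
  rw [treeWeight, hfilter, prod_image fun x _ y _ h => congrArg Prod.fst h]
  rfl

noncomputable def parentMaps (G : SimpleGraph V) (r : V) : Finset (V → V) :=
  univ.filter (IsParentMap G r)

lemma sumTrees_eq_sum_parentMaps (W : V → V → ℝ) (G : SimpleGraph V) (r : V) :
    sumTrees W G r = ∑ g ∈ parentMaps G r, parentMapWeight W r g := by
  refine sum_nbij' (fun T => parent T r) (parentGraph r) ?_ ?_ ?_ ?_ ?_
  · intro T hT
    obtain ⟨hle, hT⟩ := (mem_filter_univ T).1 hT
    exact (mem_filter_univ _).2 ((isParentMap_parent hT.connected r).mono hle)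
  · intro g hg
    have hg := (mem_filter_univ g).1 hg
    exact (mem_filter_univ _).2 ⟨hg.parentGraph_le, hg.parentGraph_isTree⟩
  · exact fun T hT => parentGraph_parent ((mem_filter_univ T).1 hT).2 r
  · exact fun g hg => parent_parentGraph ((mem_filter_univ g).1 hg)
  · exact fun T hT => treeWeight_eq_parentMapWeight W ((mem_filter_univ T).1 hT).2 r

end Tree

section CycleMap

variable {G : SimpleGraph V} {j k : V} {f g : V → V}

/-- `f` is a map along the edges of `G` whose functional graph has a single cycle, which passes
through `k`. -/
structure IsCycleMap (G : SimpleGraph V) (k : V) (f : V → V) : Prop where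
  adj_apply : ∀ v, G.Adj v (f v)
  exists_iterate_eq : ∀ v, ∃ n, 0 < n ∧ f^[n] v = k

lemma IsCycleMap.apply (hf : IsCycleMap G k f) : IsCycleMap G (f k) f where
  adj_apply := hf.adj_apply
  exists_iterate_eq v := by
    obtain ⟨n, -, hn⟩ := hf.exists_iterate_eq v
    exact ⟨n + 1, n.succ_pos, by rw [iterate_succ_apply', hn]⟩

/-- The predecessor of `k` on its cycle: with `n = hitTime f k (f k)`, `f` maps `f^[n] k` to `k`. -/
noncomputable def cyclePred (f : V → V) (k : V) : V := f^[hitTime f k (f k)] k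

lemma IsCycleMap.apply_cyclePred (hf : IsCycleMap G k f) : f (cyclePred f k) = k := by
  obtain ⟨n, hn, hnk⟩ := hf.exists_iterate_eq k
  rw [cyclePred, ← iterate_succ_apply' f, iterate_succ_apply]
  refine iterate_hitTime ⟨n - 1, ?_⟩
  rwa [← iterate_succ_apply, Nat.succ_eq_add_one, Nat.sub_add_cancel hn]

lemma IsCycleMap.adj_cyclePred (hf : IsCycleMap G k f) : G.Adj k (cyclePred f k) := by
  have := hf.adj_apply (cyclePred f k)
  rw [hf.apply_cyclePred] at this
  exact this.symm

variable [DecidableEq V]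

lemma IsParentMap.isCycleMap_update (hg : IsParentMap G j g) {i : V} (hji : G.Adj j i) :
    IsCycleMap G j (update g j i) where
  adj_apply v := by
    by_cases hv : v = j
    · subst hv
      rwa [update_self]
    · rw [update_of_ne hv]
      exact hg.adj_apply v hv
  exists_iterate_eq v := ⟨hitTime g j (update g j i v) + 1, Nat.succ_pos _, by
    rw [iterate_succ_apply, iterate_update_hitTime (hg.exists_iterate_eq _)]⟩

lemma IsCycleMap.isParentMap_update (hf : IsCycleMap G k f) (hj : ∃ n, f^[n] k = j) :
    IsParentMap G j (update f j j) where
  apply_root := update_self ..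
  adj_apply v hv := by
    rw [update_of_ne hv]
    exact hf.adj_apply v
  exists_iterate_eq v := by
    obtain ⟨n, hn⟩ := hj
    obtain ⟨m, -, hm⟩ := hf.exists_iterate_eq v
    exact ⟨_, iterate_update_hitTime ⟨n + m, by rw [iterate_add_apply, hm, hn]⟩⟩

lemma IsParentMap.cyclePred_update (hg : IsParentMap G j g) (hjk : j ≠ k) :
    cyclePred (update g j k) k = j := by
  have hj : (update g j k)^[hitTime g j k] k = j := iterate_update_hitTime (hg.exists_iterate_eq k)
  suffices hitTime (update g j k) k (update g j k k) = hitTime g j k by rw [cyclePred, this, hj]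
  refine hitTime_eq ?_ fun l hl => ?_
  · rw [← iterate_succ_apply, iterate_succ_apply', hj, update_self]
  · rw [← iterate_succ_apply,
      iterate_update_of_forall_ne fun m hm => iterate_ne_of_lt_hitTime (by omega)]
    exact hg.iterate_ne_self hjk.symm l.succ_pos

variable [Fintype V]

lemma prod_update_eq_mul_parentMapWeight (W : V → V → ℝ) (g : V → V) (j i : V) :
    ∏ v, W (update g j i v) v = W i j * parentMapWeight W j g := by
  rw [← mul_prod_erase univ _ (mem_univ j), update_self, parentMapWeight]
  congr 1
  exact prod_congr rfl fun v hv => by rw [update_of_ne (ne_of_mem_erase hv)]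

noncomputable def cycleMaps (G : SimpleGraph V) (k : V) : Finset (V → V) :=
  univ.filter (IsCycleMap G k)

/-- Closing the tree rooted at a neighbour `j` of `k` by the edge `j → k` gives a cycle map;
`j` is recovered as the predecessor of `k` on the cycle. -/
lemma sum_sum_parentMaps_eq_sum_cycleMaps (W : V → V → ℝ) (G : SimpleGraph V) (k : V) :
    ∑ j ∈ univ.filter (G.Adj k), ∑ g ∈ parentMaps G j, W k j * parentMapWeight W j g
      = ∑ f ∈ cycleMaps G k, ∏ v, W (f v) v := by
  rw [sum_sigma']
  refine sum_nbij' (fun p => update p.2 p.1 k)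
    (fun f => ⟨cyclePred f k, update f (cyclePred f k) (cyclePred f k)⟩) ?_ ?_ ?_ ?_ ?_
  · rintro ⟨j, g⟩ hp
    simp only [mem_sigma, mem_filter_univ, parentMaps] at hp
    have hf := (hp.2.isCycleMap_update hp.1.symm).apply
    rw [update_self] at hf
    exact (mem_filter_univ _).2 hf
  · intro f hf
    have hf := (mem_filter_univ f).1 hf
    simp only [mem_sigma, mem_filter_univ, parentMaps]
    exact ⟨hf.adj_cyclePred, hf.isParentMap_update ⟨_, rfl⟩⟩
  · rintro ⟨j, g⟩ hp
    simp only [mem_sigma, mem_filter_univ, parentMaps] at hp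
    rw [hp.2.cyclePred_update hp.1.ne', update_idem, update_eq_self_iff.2 hp.2.apply_root.symm]
  · intro f hf
    rw [update_idem, update_eq_self_iff.2 ((mem_filter_univ f).1 hf).apply_cyclePred.symm]
  · rintro ⟨j, g⟩ -
    exact (prod_update_eq_mul_parentMapWeight W g j k).symm

/-- Redirecting the root `k` of a tree to a neighbour `i` gives a cycle map, and `i = f k`. -/
lemma sum_sum_parentMaps_self_eq_sum_cycleMaps (W : V → V → ℝ) (G : SimpleGraph V) (k : V) :
    ∑ i ∈ univ.filter (G.Adj k), ∑ g ∈ parentMaps G k, W i k * parentMapWeight W k g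
      = ∑ f ∈ cycleMaps G k, ∏ v, W (f v) v := by
  rw [← sum_product']
  refine sum_nbij' (fun p => update p.2 k p.1) (fun f => (f k, update f k k)) ?_ ?_ ?_ ?_ ?_
  · rintro ⟨i, g⟩ hp
    simp only [mem_product, mem_filter_univ, parentMaps] at hp
    exact (mem_filter_univ _).2 (hp.2.isCycleMap_update hp.1)
  · intro f hf
    have hf := (mem_filter_univ f).1 hf
    simp only [mem_product, mem_filter_univ, parentMaps]
    exact ⟨hf.adj_apply k, hf.isParentMap_update ⟨0, rfl⟩⟩
  · rintro ⟨i, g⟩ hp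
    simp only [mem_product, mem_filter_univ, parentMaps] at hp
    rw [update_self, update_idem, update_eq_self_iff.2 hp.2.apply_root.symm]
  · rintro f -
    rw [update_idem, update_eq_self]
  · rintro ⟨i, g⟩ -
    exact (prod_update_eq_mul_parentMapWeight W g k i).symm

lemma sum_adj_mul_sumTrees (W : V → V → ℝ) (G : SimpleGraph V) (k : V) :
    ∑ j ∈ univ.filter (G.Adj k), W k j * sumTrees W G j
      = (∑ i ∈ univ.filter (G.Adj k), W i k) * sumTrees W G k := by
  rw [sumTrees_eq_sum_parentMaps W G k, sum_mul_sum, sum_sum_parentMaps_self_eq_sum_cycleMaps,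
    ← sum_sum_parentMaps_eq_sum_cycleMaps]
  simp_rw [sumTrees_eq_sum_parentMaps, mul_sum]

end CycleMap

section RateMatrix

variable {W : V → V → ℝ}

lemma rate_eq_zero_of_not_adj (hoff : ∀ i j, i ≠ j → 0 ≤ W i j)
    (hsym : ∀ i j, i ≠ j → (0 < W i j ↔ 0 < W j i)) {i j : V} (hij : i ≠ j)
    (hnadj : ¬(transGraph W).Adj i j) : W i j = 0 :=
  (hoff i j hij).eq_or_lt.elim Eq.symm fun hpos => absurd ⟨hij, hpos, (hsym i j hij).1 hpos⟩ hnadj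

variable [Fintype V]

lemma sumTrees_pos [DecidableEq V] {G : SimpleGraph V} (hc : G.Connected)
    (hW : ∀ i j, G.Adj i j → 0 < W j i) (r : V) : 0 < sumTrees W G r := by
  rw [sumTrees_eq_sum_parentMaps]
  refine sum_pos (fun g hg => prod_pos fun v hv => hW _ _ ?_)
    ⟨parent G r, (mem_filter_univ _).2 (isParentMap_parent hc r)⟩
  exact ((mem_filter_univ g).1 hg).adj_apply v (ne_of_mem_erase hv)

lemma sum_filter_adj_eq_sum_erase [DecidableEq V] (G : SimpleGraph V) (k : V) {φ : V → ℝ}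
    (hφ : ∀ j, j ≠ k → ¬G.Adj k j → φ j = 0) :
    ∑ j ∈ univ.filter (G.Adj k), φ j = ∑ j ∈ univ.erase k, φ j :=
  sum_subset (fun j hj => mem_erase.2 ⟨((mem_filter_univ j).1 hj).ne', mem_univ j⟩)
    fun j hj hnadj => hφ j (ne_of_mem_erase hj) fun hadj => hnadj ((mem_filter_univ j).2 hadj)

lemma sum_rate_mul_sumTrees [DecidableEq V] (hoff : ∀ i j, i ≠ j → 0 ≤ W i j)
    (hsym : ∀ i j, i ≠ j → (0 < W i j ↔ 0 < W j i))
    (hdiag : ∀ j, W j j = -∑ i ∈ univ.filter (fun i => i ≠ j), W i j) (k : V) :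
    ∑ j, W k j * sumTrees W (transGraph W) j = 0 := by
  have hin := sum_filter_adj_eq_sum_erase (transGraph W) k
    (φ := fun j => W k j * sumTrees W (transGraph W) j)
    fun j hjk hnadj => by rw [rate_eq_zero_of_not_adj hoff hsym hjk.symm hnadj, zero_mul]
  have hout := sum_filter_adj_eq_sum_erase (transGraph W) k (φ := fun i => W i k)
    fun i hik hnadj => rate_eq_zero_of_not_adj hoff hsym hik fun hadj => hnadj hadj.symm
  have hbalance := sum_adj_mul_sumTrees W (transGraph W) k
  rw [hin, hout] at hbalance
  rw [← add_sum_erase univ _ (mem_univ k), hbalance, hdiag k, filter_ne']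
  ring

/-- Maximum principle: with `M = p k / q k`, all terms of `∑ i, W k i * (p i - M * q i) = 0`
are nonpositive, hence zero. -/
lemma div_eq_of_forall_div_le (hoff : ∀ i j, i ≠ j → 0 ≤ W i j) {p q : V → ℝ}
    (hq : ∀ k, 0 < q k) (hpW : ∀ k, ∑ j, W k j * p j = 0) (hqW : ∀ k, ∑ j, W k j * q j = 0)
    {k j : V} (hmax : ∀ i, p i / q i ≤ p k / q k) (hkj : 0 < W k j) :
    p j / q j = p k / q k := by
  set M := p k / q k
  have hle : ∀ i, p i - M * q i ≤ 0 := fun i => by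
    have := hmax i
    rw [div_le_iff₀ (hq i)] at this
    linarith
  have hk : p k - M * q k = 0 := by rw [div_mul_cancel₀ _ (hq k).ne', sub_self]
  have hsum : ∑ i, W k i * (p i - M * q i) = 0 := by
    simp_rw [mul_sub, mul_left_comm _ M, sum_sub_distrib, ← mul_sum, hpW, hqW, mul_zero, sub_zero]
  have hnonpos : ∀ i ∈ univ, W k i * (p i - M * q i) ≤ 0 := fun i _ => by
    by_cases hik : i = k
    · rw [hik, hk, mul_zero]
    · exact mul_nonpos_of_nonneg_of_nonpos (hoff k i (Ne.symm hik)) (hle i)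
  have hj := (sum_eq_zero_iff_of_nonpos hnonpos).1 hsum j (mem_univ j)
  have := (mul_eq_zero.1 hj).resolve_left hkj.ne'
  rw [div_eq_iff (hq j).ne']
  linarith

lemma eq_of_stationary (hoff : ∀ i j, i ≠ j → 0 ≤ W i j) {G : SimpleGraph V}
    (hc : G.Connected) (hW : ∀ i j, G.Adj i j → 0 < W i j) {p q : V → ℝ} (hq : ∀ k, 0 < q k)
    (hpW : ∀ k, ∑ j, W k j * p j = 0) (hqW : ∀ k, ∑ j, W k j * q j = 0)
    (hsum : ∑ k, p k = ∑ k, q k) : p = q := by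
  have := hc.nonempty
  obtain ⟨k, hk⟩ := Finite.exists_max fun i => p i / q i
  have hwalk : ∀ {a b : V} (w : G.Walk a b), p a / q a = p k / q k → p b / q b = p k / q k := by
    intro a b w
    induction w with
    | nil => exact id
    | cons hadj _ ih =>
      exact fun ha => ih ((div_eq_of_forall_div_le hoff hq hpW hqW
        (fun i => (hk i).trans ha.ge) (hW _ _ hadj)).trans ha)
  have hpq : ∀ j, p j = p k / q k * q j := fun j => by
    rw [← hwalk (hc k j).some rfl, div_mul_cancel₀ _ (hq j).ne']
  have hQ : ∑ j, q j ≠ 0 := (sum_pos (fun j _ => hq j) univ_nonempty).ne'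
  have hM : p k / q k = 1 := by
    rw [sum_congr rfl fun j _ => hpq j, ← mul_sum] at hsum
    exact (mul_eq_right₀ hQ).1 hsum
  funext j
  rw [hpq j, hM, one_mul]

end RateMatrix

end MarkovChainTree

/-- The matrix-tree vector `π` is strictly positive and is the
unique probability distribution annihilated by the rate matrix `W`. -/
theorem stmt0 {V : Type*} [Fintype V] [DecidableEq V] (W : V → V → ℝ)
    (hoff : ∀ i j, i ≠ j → 0 ≤ W i j)
    (hsym : ∀ i j, i ≠ j → (0 < W i j ↔ 0 < W j i))
    (hdiag : ∀ j, W j j = -∑ i ∈ Finset.univ.filter (fun i => i ≠ j), W i j)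
    (hconn : (transGraph W).Connected) :
    (∀ k, 0 < mttPi W (transGraph W) k) ∧
    (∑ k, mttPi W (transGraph W) k = 1) ∧
    (∀ k, ∑ j, W k j * mttPi W (transGraph W) j = 0) ∧
    (∀ p : V → ℝ, (∀ k, 0 ≤ p k) → (∑ k, p k = 1) →
      (∀ k, ∑ j, W k j * p j = 0) → p = mttPi W (transGraph W)) := by
  have hS : ∀ k, 0 < sumTrees W (transGraph W) k :=
    MarkovChainTree.sumTrees_pos hconn fun _ _ h => h.2.2
  have hZ : 0 < ∑ l, sumTrees W (transGraph W) l :=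
    sum_pos (fun l _ => hS l) (univ_nonempty_iff.2 hconn.nonempty)
  have hpos : ∀ k, 0 < mttPi W (transGraph W) k := fun k => div_pos (hS k) hZ
  have hnorm : ∑ k, mttPi W (transGraph W) k = 1 := by
    simp_rw [mttPi, ← sum_div, div_self hZ.ne']
  have hstat : ∀ k, ∑ j, W k j * mttPi W (transGraph W) j = 0 := fun k => by
    simp_rw [mttPi, mul_div_assoc', ← sum_div,
      MarkovChainTree.sum_rate_mul_sumTrees hoff hsym hdiag k, zero_div]
  refine ⟨hpos, hnorm, hstat, fun p _ hp hpW => ?_⟩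
  exact MarkovChainTree.eq_of_stationary hoff hconn (fun _ _ h => h.2.1) hpos hpW hstat
    (by rw [hp, hnorm])
end

section
/- For every pair of states i, k, the partial derivative of the steady-state probability π_i with respect to the vertex parameter E_k equals -π_k(1-π_k) if i = k, and equals π_i π_k if i ≠ k. -/
/-!
Raising `E_k` by `s` multiplies the rate of every jump out of `k` by `e^s` and leaves all
other rates alone. A spanning tree directed towards a root `r ≠ k` has exactly one edge
leaving `k`, while the tree directed towards `k` has none; so the rooted-tree sums become
`S_k` and `e^s S_r` (`r ≠ k`), and `π_i` is `S_i e^{s[i ≠ k]} / (S_k + e^s ∑_{r ≠ k} S_r)`,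
whose derivative at `s = 0` is the claimed one.
-/

open Finset

attribute [local instance] Classical.propDecidable

namespace SimpleGraph

variable {V : Type*} {G : SimpleGraph V}

lemma Reachable.exists_adj_dist_add_one_eq {u v : V} (h : G.Reachable u v) (hne : u ≠ v) :
    ∃ w, G.Adj u w ∧ G.dist w v + 1 = G.dist u v := by
  obtain ⟨p, hp⟩ := h.exists_walk_length_eq_dist
  cases p with
  | nil => exact absurd rfl hne
  | @cons _ w _ hadj q =>
    refine ⟨w, hadj, le_antisymm ?_ ?_⟩
    · have := dist_le q
      simp only [Walk.length_cons] at hp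
      omega
    · have := hadj.reachable.dist_triangle_left v
      rw [dist_eq_one_iff_adj.mpr hadj] at this
      omega

lemma IsAcyclic.eq_of_adj_of_dist_add_one_eq (hG : G.IsAcyclic) {u v w₁ w₂ : V}
    (h₁ : G.Adj u w₁) (h₂ : G.Adj u w₂) (hd₁ : G.dist w₁ v + 1 = G.dist u v)
    (hd₂ : G.dist w₂ v + 1 = G.dist u v) : w₁ = w₂ := by
  have huv : G.Reachable u v := Reachable.of_dist_ne_zero (by omega)
  have hr₁ := h₁.reachable.symm.trans huv
  have hr₂ := h₂.reachable.symm.trans huv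
  obtain ⟨q₁, hq₁⟩ := hr₁.exists_walk_length_eq_dist
  obtain ⟨q₂, hq₂⟩ := hr₂.exists_walk_length_eq_dist
  have hp₁ := (Walk.cons h₁ q₁).isPath_of_length_eq_dist (by simp [hq₁, hd₁])
  have hp₂ := (Walk.cons h₂ q₂).isPath_of_length_eq_dist (by simp [hq₂, hd₂])
  -- shortest walks are paths, and a forest has only one path from `u` to `v`
  have := congrArg (fun p : G.Path u v => p.1.snd)
    ((hG.subsingleton_path u v).elim ⟨_, hp₁⟩ ⟨_, hp₂⟩)
  simpa using this

end SimpleGraph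

section RootedTrees

variable {V : Type*} [Fintype V]

noncomputable def rootedEdges (T : SimpleGraph V) (r : V) : Finset (V × V) :=
  univ.filter (fun p : V × V => T.Adj p.1 p.2 ∧ T.dist p.2 r + 1 = T.dist p.1 r)

lemma treeWeight_eq_prod_rootedEdges (W : V → V → ℝ) (T : SimpleGraph V) (r : V) :
    treeWeight W T r = ∏ p ∈ rootedEdges T r, W p.2 p.1 := rfl

lemma SimpleGraph.IsTree.card_rootedEdges_filter_fst [DecidableEq V] {T : SimpleGraph V}
    (hT : T.IsTree) (r k : V) : #{p ∈ rootedEdges T r | p.1 = k} = if r = k then 0 else 1 := by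
  split_ifs with hrk
  · subst hrk
    refine card_eq_zero.mpr (filter_eq_empty_iff.mpr fun p hp hpk => ?_)
    have := (mem_filter.mp hp).2.2
    rw [hpk, SimpleGraph.dist_self] at this
    omega
  · obtain ⟨j, hkj, hj⟩ := (hT.connected k r).exists_adj_dist_add_one_eq (Ne.symm hrk)
    refine card_eq_one.mpr ⟨(k, j), eq_singleton_iff_unique_mem.mpr ⟨?_, ?_⟩⟩
    · simp [rootedEdges, hkj, hj]
    · rintro ⟨a, b⟩ hab
      simp only [rootedEdges, mem_filter, mem_univ, true_and] at hab
      obtain ⟨⟨hadj, hd⟩, rfl⟩ := hab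
      rw [hT.isAcyclic.eq_of_adj_of_dist_add_one_eq hadj hkj hd hj]

end RootedTrees

section TreeSums

variable {V : Type*} [Fintype V] [DecidableEq V]

def scaleOut (W : V → V → ℝ) (k : V) (c : ℝ) : V → V → ℝ :=
  fun a b => W a b * if b = k then c else 1

lemma treeWeight_scaleOut (W : V → V → ℝ) (k : V) (c : ℝ) {T : SimpleGraph V}
    (hT : T.IsTree) (r : V) :
    treeWeight (scaleOut W k c) T r = treeWeight W T r * if r = k then 1 else c := by
  simp only [treeWeight_eq_prod_rootedEdges, scaleOut, prod_mul_distrib, prod_ite, prod_const,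
    hT.card_rootedEdges_filter_fst]
  split_ifs <;> simp

lemma sumTrees_scaleOut (W : V → V → ℝ) (k : V) (c : ℝ) (G : SimpleGraph V) (r : V) :
    sumTrees (scaleOut W k c) G r = sumTrees W G r * if r = k then 1 else c := by
  rw [sumTrees, sumTrees, sum_mul]
  exact sum_congr rfl fun T hT => treeWeight_scaleOut W k c (mem_filter.mp hT).2.2 r

lemma sumTrees_pos {W : V → V → ℝ} {G : SimpleGraph V} (hG : G.Connected)
    (hW : ∀ a b, G.Adj a b → 0 < W a b) (r : V) : 0 < sumTrees W G r := by
  obtain ⟨T, hTG, hT⟩ := hG.exists_isTree_le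
  refine sum_pos (fun T' hT' => prod_pos fun p hp => hW _ _ ?_)
    ⟨T, mem_filter.mpr ⟨mem_univ T, hTG, hT⟩⟩
  exact (mem_filter.mp hT').2.1 (mem_filter.mp hp).2.1.symm

end TreeSums

section Rates

variable {V : Type*} (G : SimpleGraph V) (Bp : V → V → ℝ) (Ep : V → ℝ) (Fp : V → V → ℝ)

lemma rates_pos {a b : V} (h : G.Adj a b) : 0 < rates G Bp Ep Fp a b := by
  simp only [rates, if_pos h]
  exact Real.exp_pos _

lemma rates_update_vertex [DecidableEq V] (k : V) (t : ℝ) :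
    rates G Bp (Function.update Ep k t) Fp =
      scaleOut (rates G Bp Ep Fp) k (Real.exp (t - Ep k)) := by
  ext a b
  by_cases hab : G.Adj a b
  · simp only [scaleOut, rates, if_pos hab, Function.update_apply]
    split_ifs with hbk
    · rw [hbk, ← Real.exp_add]
      ring_nf
    · rw [mul_one]
  · simp [scaleOut, rates, hab]

end Rates

lemma hasDerivAt_div_sum_mul_exp {V : Type*} [Fintype V] [DecidableEq V] (S : V → ℝ)
    (hS : ∑ l, S l ≠ 0) (i k : V) (c : ℝ) :
    HasDerivAt
      (fun t => (S i * if i = k then 1 else Real.exp (t - c)) /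
        ∑ l, S l * if l = k then 1 else Real.exp (t - c))
      (if i = k then -(S k / (∑ l, S l) * (1 - S k / ∑ l, S l))
       else S i / (∑ l, S l) * (S k / ∑ l, S l)) c := by
  have hterm : ∀ l, HasDerivAt (fun t => S l * if l = k then 1 else Real.exp (t - c))
      (S l * if l = k then 0 else 1) c := by
    intro l
    split_ifs
    · simpa using hasDerivAt_const c (S l)
    · simpa using (((hasDerivAt_id c).sub_const c).exp).const_mul (S l)
  have hsum : ∑ l, (S l * if l = k then 0 else 1) = ∑ l, S l - S k := by
    simp [mul_ite, sum_ite, filter_ne']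
  have hD := HasDerivAt.fun_sum (u := univ) fun l _ => hterm l
  refine ((hterm i).div hD (by simpa using hS)).congr_deriv ?_
  simp only [hsum, sub_self, Real.exp_zero, ite_self, mul_one]
  split_ifs with hik
  · subst hik
    field_simp
    ring
  · field_simp
    ring

theorem stmt1_general {V : Type*} [Fintype V] [DecidableEq V]
    (G : SimpleGraph V) (hG : G.Connected)
    (Bp : V → V → ℝ) (Ep : V → ℝ) (Fp : V → V → ℝ)
    (i k : V) :
    HasDerivAt (fun t => piP G Bp (Function.update Ep k t) Fp i)
      (if i = k then -(piP G Bp Ep Fp k * (1 - piP G Bp Ep Fp k))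
       else piP G Bp Ep Fp i * piP G Bp Ep Fp k) (Ep k) := by
  set S := sumTrees (rates G Bp Ep Fp) G
  have hS : ∑ l, S l ≠ 0 :=
    (sum_pos (fun l _ => sumTrees_pos hG (fun _ _ => rates_pos G Bp Ep Fp) l)
      (univ_nonempty_iff.mpr hG.nonempty)).ne'
  have hπ : ∀ t, piP G Bp (Function.update Ep k t) Fp i =
      (S i * if i = k then 1 else Real.exp (t - Ep k)) /
        ∑ l, S l * if l = k then 1 else Real.exp (t - Ep k) := fun t => by
    simp only [piP, mttPi, rates_update_vertex, sumTrees_scaleOut, S]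
  simp only [hπ]
  exact hasDerivAt_div_sum_mul_exp S hS i k (Ep k)

/-- response of the steady state to a vertex perturbation:
`∂π_i/∂E_k = -π_k(1-π_k)` if `i = k` and `π_i π_k` otherwise. -/
theorem stmt1 {V : Type*} [Fintype V] [DecidableEq V]
    (G : SimpleGraph V) (hG : G.Connected)
    (Bp : V → V → ℝ) (Ep : V → ℝ) (Fp : V → V → ℝ)
    (hB : ∀ i j, Bp i j = Bp j i) (hF : ∀ i j, Fp i j = -Fp j i)
    (i k : V) :
    HasDerivAt (fun t => piP G Bp (Function.update Ep k t) Fp i)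
      (if i = k then -(piP G Bp Ep Fp k * (1 - piP G Bp Ep Fp k))
       else piP G Bp Ep Fp i * piP G Bp Ep Fp k) (Ep k) :=
  stmt1_general G hG Bp Ep Fp i k
end

section
/- (Cycle-flip lemma) For any spanning trees T, S of G and any vertices i, j of G, w(T_i) w(S_j) / (w(T_j) w(S_i)) ≤ exp(F_{i↔j}). -/
open Finset

attribute [local instance] Classical.propDecidable

/-!
Rerooting a tree across one of its edges `{i, j}` reverses only that edge, so
`w(T_i) W_ji = w(T_j) W_ij`. Telescoping along the tree path `P` from `i` to `j` gives
`w(T_i) / w(T_j) = w(P*) / w(P)`, and likewise `w(S_j) / w(S_i) = w(Q*) / w(Q)` for the path `Q`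
of `S` from `j` to `i`. The ratio in question is therefore `w(P*) w(Q*) / (w(P) w(Q))`, whose
logarithm is at most `F_{i↔j}` in absolute value.
-/

namespace SimpleGraph

variable {V : Type*} {G T : SimpleGraph V}

lemma Walk.snd_concat {u v w : V} {p : G.Walk u v} (hp : ¬p.Nil) (h : G.Adj v w) :
    (p.concat h).snd = p.snd := by
  cases p with
  | nil => exact absurd Walk.Nil.nil hp
  | cons => simp [Walk.concat_cons]

lemma IsTree.length_eq_dist (hT : T.IsTree) {u v : V} {p : T.Walk u v} (hp : p.IsPath) :
    p.length = T.dist u v := by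
  obtain ⟨q, hq, hlen⟩ := hT.connected.exists_path_of_dist u v
  rw [(hT.existsUnique_path u v).unique hp hq, hlen]

-- At the root this is junk: `hT.parent r r = r`.
noncomputable def IsTree.parent (hT : T.IsTree) (r v : V) : V :=
  (hT.existsUnique_path v r).exists.choose.snd

lemma IsTree.parent_eq_snd (hT : T.IsTree) {r v : V} {p : T.Walk v r} (hp : p.IsPath) :
    hT.parent r v = p.snd := by
  rw [IsTree.parent,
    (hT.existsUnique_path v r).unique (hT.existsUnique_path v r).exists.choose_spec hp]

lemma IsTree.adj_and_dist_add_one_eq_iff (hT : T.IsTree) (r v u : V) :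
    T.Adj v u ∧ T.dist u r + 1 = T.dist v r ↔ v ≠ r ∧ u = hT.parent r v := by
  constructor
  · rintro ⟨hadj, hd⟩
    obtain ⟨q, -, hql⟩ := hT.connected.exists_path_of_dist u r
    have hp : (q.cons hadj).IsPath :=
      (q.cons hadj).isPath_of_length_eq_dist (by rw [Walk.length_cons, hql, hd])
    refine ⟨?_, by rw [hT.parent_eq_snd hp, Walk.snd_cons]⟩
    rintro rfl
    simp at hd
  · rintro ⟨hvr, rfl⟩
    obtain ⟨p, hp, hpl⟩ := hT.connected.exists_path_of_dist v r
    have hnil : ¬p.Nil := fun h => hvr h.eq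
    rw [hT.parent_eq_snd hp, ← hpl, ← Walk.length_tail_add_one hnil, hT.length_eq_dist hp.tail]
    exact ⟨p.adj_snd hnil, rfl⟩

lemma IsTree.parent_eq_of_adj (hT : T.IsTree) {r v : V} (h : T.Adj v r) : hT.parent r v = r := by
  rw [hT.parent_eq_snd (Path.singleton h).property, Path.singleton_coe, Walk.snd_cons]

lemma IsTree.parent_eq_parent_of_adj (hT : T.IsTree) {i j v : V} (hij : T.Adj i j)
    (hvi : v ≠ i) (hvj : v ≠ j) : hT.parent i v = hT.parent j v := by
  obtain ⟨p, hp⟩ := (hT.existsUnique_path v i).exists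
  obtain ⟨q, hq⟩ := (hT.existsUnique_path v j).exists
  rw [hT.parent_eq_snd hp, hT.parent_eq_snd hq]
  by_cases hi : i ∈ q.support
  · rw [hT.isAcyclic.path_concat hp hq hij hi, Walk.snd_concat fun h => hvi h.eq]
  · have hj := hT.isAcyclic.mem_support_of_ne_mem_support_of_adj_of_isPath hp hq hij hi
    rw [hT.isAcyclic.path_concat hq hp hij.symm hj, Walk.snd_concat fun h => hvj h.eq]

end SimpleGraph

section Weights

open SimpleGraph

variable {V : Type*} (W : V → V → ℝ)

section WalkWeight

variable {G : SimpleGraph V}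

@[simp]
lemma walkWeight_nil {u : V} : walkWeight W (Walk.nil : G.Walk u u) = 1 := by
  simp [walkWeight]

@[simp]
lemma walkWeight_cons {u v w : V} (h : G.Adj u v) (p : G.Walk v w) :
    walkWeight W (Walk.cons h p) = W v u * walkWeight W p := by
  simp [walkWeight]

@[simp]
lemma walkWeight_append {u v w : V} (p : G.Walk u v) (q : G.Walk v w) :
    walkWeight W (p.append q) = walkWeight W p * walkWeight W q := by
  simp [walkWeight]

@[simp]
lemma walkWeight_mapLe {G' : SimpleGraph V} (h : G ≤ G') {u v : V} (p : G.Walk u v) :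
    walkWeight W (p.mapLe h) = walkWeight W p := by
  induction p with
  | nil => simp
  | cons _ _ ih => simp [ih]

lemma walkWeight_pos {u v : V} (p : (transGraph W).Walk u v) : 0 < walkWeight W p :=
  List.prod_pos fun _ hx => by
    obtain ⟨d, -, rfl⟩ := List.mem_map.1 hx
    exact d.adj.2.2

lemma div_le_exp_Fbtw [Fintype V] {i j : V} {p : G.Walk i j} {q : G.Walk j i}
    (hp : p.IsPath) (hq : q.IsPath) :
    walkWeight W p.reverse * walkWeight W q.reverse / (walkWeight W p * walkWeight W q)
      ≤ Real.exp (Fbtw W G i j) := by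
  have hbdd : BddAbove {x : ℝ | ∃ (p : G.Walk i j) (q : G.Walk j i), p.IsPath ∧ q.IsPath ∧
      x = |Real.log (walkWeight W p * walkWeight W q /
        (walkWeight W p.reverse * walkWeight W q.reverse))|} := by
    refine (Set.finite_range fun pq : G.Path i j × G.Path j i =>
      |Real.log (walkWeight W pq.1.val * walkWeight W pq.2.val /
        (walkWeight W pq.1.val.reverse * walkWeight W pq.2.val.reverse))|).bddAbove.mono ?_
    rintro _ ⟨p, q, hp, hq, rfl⟩
    exact ⟨(⟨p, hp⟩, ⟨q, hq⟩), rfl⟩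
  calc _ ≤ Real.exp (Real.log _) := Real.le_exp_log _
    _ ≤ Real.exp (Fbtw W G i j) := by
      rw [Real.exp_le_exp, ← inv_div, Real.log_inv]
      exact (neg_le_abs _).trans (le_csSup hbdd ⟨p, q, hp, hq, rfl⟩)

end WalkWeight

section TreeWeight

variable [Fintype V] {T : SimpleGraph V}

lemma treeWeight_eq_prod_parent (hT : T.IsTree) (r : V) :
    treeWeight W T r = ∏ v ∈ univ.filter (· ≠ r), W (hT.parent r v) v := by
  have hedges : univ.filter (fun p : V × V => T.Adj p.1 p.2 ∧ T.dist p.2 r + 1 = T.dist p.1 r)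
      = (univ.filter (· ≠ r)).image fun v => (v, hT.parent r v) := by
    ext ⟨a, b⟩
    simp only [mem_filter, mem_univ, true_and, mem_image, Prod.mk.injEq]
    rw [hT.adj_and_dist_add_one_eq_iff]
    constructor
    · rintro ⟨har, rfl⟩
      exact ⟨a, har, rfl, rfl⟩
    · rintro ⟨v, hvr, rfl, rfl⟩
      exact ⟨hvr, rfl⟩
  rw [treeWeight, hedges, prod_image fun _ _ _ _ h => congrArg Prod.fst h]

lemma treeWeight_mul_eq_of_adj (hT : T.IsTree) {i j : V} (hij : T.Adj i j) :
    treeWeight W T i * W j i = treeWeight W T j * W i j := by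
  have hrest : ∏ v ∈ (univ.filter (· ≠ i)).erase j, W (hT.parent i v) v
      = ∏ v ∈ (univ.filter (· ≠ j)).erase i, W (hT.parent j v) v := by
    refine prod_congr (by ext; simp only [mem_erase, mem_filter, mem_univ, true_and]; tauto)
      fun v hv => ?_
    simp only [mem_erase, mem_filter, mem_univ, true_and] at hv
    rw [hT.parent_eq_parent_of_adj hij hv.1 hv.2]
  rw [treeWeight_eq_prod_parent W hT i, treeWeight_eq_prod_parent W hT j,
    ← mul_prod_erase _ _ (mem_filter.2 ⟨mem_univ j, hij.ne'⟩),
    ← mul_prod_erase _ _ (mem_filter.2 ⟨mem_univ i, hij.ne⟩), hrest,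
    hT.parent_eq_of_adj hij.symm, hT.parent_eq_of_adj hij]
  ring

lemma treeWeight_mul_walkWeight (hT : T.IsTree) {a b : V} (p : T.Walk a b) :
    treeWeight W T a * walkWeight W p = treeWeight W T b * walkWeight W p.reverse := by
  induction p with
  | nil => simp
  | @cons u v w h q ih =>
    simp only [walkWeight_cons, Walk.reverse_cons, walkWeight_append, walkWeight_nil]
    linear_combination walkWeight W q * treeWeight_mul_eq_of_adj W hT h + W u v * ih

lemma treeWeight_pos (hle : T ≤ transGraph W) (r : V) : 0 < treeWeight W T r :=
  prod_pos fun _ hp => (hle (mem_filter.1 hp).2.1).2.2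

lemma treeWeight_div_treeWeight (hT : IsSpanningTree (transGraph W) T) {a b : V}
    (p : T.Walk a b) :
    treeWeight W T a / treeWeight W T b
      = walkWeight W (p.mapLe hT.1).reverse / walkWeight W (p.mapLe hT.1) := by
  rw [div_eq_div_iff (treeWeight_pos W hT.1 b).ne' (walkWeight_pos W _).ne', Walk.reverse_mapLe,
    walkWeight_mapLe, walkWeight_mapLe, treeWeight_mul_walkWeight W hT.2, mul_comm]

end TreeWeight

end Weights

theorem stmt8_general {V : Type*} [Fintype V] (W : V → V → ℝ)
    (T S : SimpleGraph V)
    (hT : IsSpanningTree (transGraph W) T) (hS : IsSpanningTree (transGraph W) S)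
    (i j : V) :
    treeWeight W T i * treeWeight W S j / (treeWeight W T j * treeWeight W S i)
      ≤ Real.exp (Fbtw W (transGraph W) i j) := by
  obtain ⟨P, hP⟩ := (hT.2.existsUnique_path i j).exists
  obtain ⟨Q, hQ⟩ := (hS.2.existsUnique_path j i).exists
  rw [mul_div_mul_comm, treeWeight_div_treeWeight W hT P, treeWeight_div_treeWeight W hS Q,
    div_mul_div_comm]
  exact div_le_exp_Fbtw W (hP.mapLe hT.1) (hQ.mapLe hS.1)

/-- cycle-flip lemma: for spanning trees `T, S` and vertices
`i, j`, `w(T_i)w(S_j)/(w(T_j)w(S_i)) ≤ exp(F_{i↔j})`. -/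
theorem stmt8 {V : Type*} [Fintype V] [DecidableEq V] (W : V → V → ℝ)
    (hoff : ∀ i j, i ≠ j → 0 ≤ W i j)
    (hsym : ∀ i j, i ≠ j → (0 < W i j ↔ 0 < W j i))
    (hconn : (transGraph W).Connected)
    (T S : SimpleGraph V)
    (hT : IsSpanningTree (transGraph W) T) (hS : IsSpanningTree (transGraph W) S)
    (i j : V) :
    treeWeight W T i * treeWeight W S j / (treeWeight W T j * treeWeight W S i)
      ≤ Real.exp (Fbtw W (transGraph W) i j) :=
  stmt8_general W T S hT hS i j
end

section
/- Let i ≤ j be integers and let a_n > 0 and b_n > 0 for i ≤ n ≤ j. Then |(∑_{n=i}^j n a_n)(∑_{n=i}^j b_n) - (∑_{n=i}^j n b_n)(∑_{n=i}^j a_n)| / ((∑_{n=i}^j a_n)(∑_{n=i}^j b_n)) ≤ ∑_{m=i+1}^j tanh( (1/4) |ln( (∑_{n=m}^j a_n)(∑_{n=i}^{m-1} b_n) / ((∑_{n=m}^j b_n)(∑_{n=i}^{m-1} a_n)) )| ). -/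
open Finset Real

/-! Abel summation turns the numerator into `∑ m, (Sᵃₘ B - Sᵇₘ A)` with `Sᶜₘ = ∑_{n ≥ m} cₙ`.
Splitting `A = Tᵃₘ + Sᵃₘ`, `B = Tᵇₘ + Sᵇₘ` at `m`, the `m`-th term becomes
`|x - y| / (A B)` with `x = Sᵃₘ Tᵇₘ`, `y = Sᵇₘ Tᵃₘ`. Factoring `x - y = (√x - √y)(√x + √y)` and
bounding `(√x + √y)² ≤ A B` by Cauchy–Schwarz leaves `|√x - √y| / (√x + √y)`, which is
`tanh (|log (x / y)| / 4)`. -/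

theorem sum_Icc_eq_sum_Icc_sub_one_add_sum_Icc {M : Type*} [AddCommMonoid M] (f : ℤ → M)
    {i m j : ℤ} (him : i ≤ m) (hmj : m ≤ j + 1) :
    ∑ n ∈ Icc i j, f n = ∑ n ∈ Icc i (m - 1), f n + ∑ n ∈ Icc m j, f n := by
  rw [← Ico_add_one_right_eq_Icc i j, ← Ico_add_one_right_eq_Icc m j, Icc_sub_one_right_eq_Ico,
    ← sum_union (Ico_disjoint_Ico_consecutive i m (j + 1)), Ico_union_Ico_eq_Ico him hmj]

theorem sum_Icc_pos_of_subset {M : Type*} [AddCommMonoid M] [PartialOrder M]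
    [IsOrderedCancelAddMonoid M] {f : ℤ → M} {i j : ℤ} (hf : ∀ n ∈ Icc i j, 0 < f n)
    {k l : ℤ} (hik : i ≤ k) (hkl : k ≤ l) (hlj : l ≤ j) : 0 < ∑ n ∈ Icc k l, f n :=
  sum_pos (fun n hn ↦ hf n (Icc_subset_Icc hik hlj hn)) (nonempty_Icc.2 hkl)

theorem sum_Icc_intCast_mul {R : Type*} [CommRing R] (f : ℤ → R) (i j : ℤ) :
    ∑ n ∈ Icc i j, (n : R) * f n
      = i * ∑ n ∈ Icc i j, f n + ∑ m ∈ Icc (i + 1) j, ∑ n ∈ Icc m j, f n := by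
  have hcard : ∀ n ∈ Icc i j, (n : R) = i + #(Icc (i + 1) n) := by
    intro n hn
    rw [Int.card_Icc, show n + 1 - (i + 1) = n - i by ring,
      ← Int.cast_natCast, Int.toNat_of_nonneg (by linarith [(mem_Icc.1 hn).1])]
    push_cast; ring
  rw [sum_congr rfl fun n hn ↦ by rw [hcard n hn], mul_sum]
  simp only [add_mul, sum_add_distrib, ← nsmul_eq_mul, ← sum_const]
  congr 1
  exact sum_comm' fun n m ↦ by simp only [mem_Icc]; omega

theorem tanh_log_div_two {w : ℝ} (hw : 0 < w) : tanh (log w / 2) = (w - 1) / (w + 1) := by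
  have hsq : exp (log w / 2) ^ 2 = w := by
    rw [← exp_nat_mul, Nat.cast_ofNat, mul_div_cancel₀ _ two_ne_zero, exp_log hw]
  have := exp_pos (log w / 2)
  rw [tanh_eq, exp_neg]
  conv_rhs => rw [← hsq]
  field_simp

theorem tanh_abs_log_div_div_two {u v : ℝ} (hu : 0 < u) (hv : 0 < v) :
    tanh (|log (u / v)| / 2) = |u - v| / (u + v) := by
  rcases le_total v u with h | h
  · rw [abs_of_nonneg (log_nonneg ((one_le_div hv).2 h)), tanh_log_div_two (div_pos hu hv),
      abs_of_nonneg (sub_nonneg.2 h)]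
    field_simp
  · rw [abs_of_nonpos (log_nonpos (div_nonneg hu.le hv.le) ((div_le_one hv).2 h)), ← log_inv,
      inv_div, tanh_log_div_two (div_pos hv hu), abs_of_nonpos (sub_nonpos.2 h)]
    field_simp
    ring

theorem tanh_quarter_abs_log_div {x y : ℝ} (hx : 0 < x) (hy : 0 < y) :
    tanh (1 / 4 * |log (x / y)|) = |√x - √y| / (√x + √y) := by
  have hlog : log (x / y) = 2 * log (√x / √y) := by
    rw [← sqrt_div' _ hy.le, log_sqrt (div_nonneg hx.le hy.le)]; ring
  rw [← tanh_abs_log_div_div_two (sqrt_pos.2 hx) (sqrt_pos.2 hy), hlog, abs_mul, abs_two]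
  ring_nf

theorem sq_sqrt_mul_add_sqrt_mul_le {a b c d : ℝ} (ha : 0 ≤ a) (hb : 0 ≤ b) (hc : 0 ≤ c)
    (hd : 0 ≤ d) : (√(a * c) + √(b * d)) ^ 2 ≤ (a + b) * (c + d) := by
  rw [sqrt_mul ha, sqrt_mul hb]
  nlinarith [sq_sqrt ha, sq_sqrt hb, sq_sqrt hc, sq_sqrt hd, sq_nonneg (√a * √d - √b * √c)]

theorem abs_sub_div_le_tanh_quarter_abs_log {p q r s : ℝ} (hp : 0 < p) (hq : 0 < q) (hr : 0 < r)
    (hs : 0 < s) :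
    |p * (s + r) - r * (q + p)| / ((q + p) * (s + r)) ≤ tanh (1 / 4 * |log (p * s / (r * q))|) := by
  have hx : 0 < p * s := mul_pos hp hs
  have hy : 0 < r * q := mul_pos hr hq
  have hsum : 0 < √(p * s) + √(r * q) := by positivity
  have hnum : |p * (s + r) - r * (q + p)| = |√(p * s) - √(r * q)| * (√(p * s) + √(r * q)) := by
    rw [← abs_of_pos hsum, ← abs_mul]
    congr 1
    linear_combination sq_sqrt hy.le - sq_sqrt hx.le
  have hden : (√(p * s) + √(r * q)) ^ 2 ≤ (q + p) * (s + r) := by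
    rw [add_comm q, mul_comm r q]
    exact sq_sqrt_mul_add_sqrt_mul_le hp.le hq.le hs.le hr.le
  rw [tanh_quarter_abs_log_div hx hy, hnum]
  calc |√(p * s) - √(r * q)| * (√(p * s) + √(r * q)) / ((q + p) * (s + r))
      ≤ |√(p * s) - √(r * q)| * (√(p * s) + √(r * q)) / (√(p * s) + √(r * q)) ^ 2 := by gcongr
    _ = |√(p * s) - √(r * q)| / (√(p * s) + √(r * q)) := by field_simp

theorem stmt9_general (i j : ℤ) (a b : ℤ → ℝ)
    (ha : ∀ n ∈ Finset.Icc i j, 0 < a n) (hb : ∀ n ∈ Finset.Icc i j, 0 < b n) :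
    |(∑ n ∈ Finset.Icc i j, (n : ℝ) * a n) * (∑ n ∈ Finset.Icc i j, b n) -
        (∑ n ∈ Finset.Icc i j, (n : ℝ) * b n) * (∑ n ∈ Finset.Icc i j, a n)| /
      ((∑ n ∈ Finset.Icc i j, a n) * (∑ n ∈ Finset.Icc i j, b n))
      ≤ ∑ m ∈ Finset.Icc (i + 1) j,
          Real.tanh ((1 / 4) *
            |Real.log ((∑ n ∈ Finset.Icc m j, a n) * (∑ n ∈ Finset.Icc i (m - 1), b n) /
              ((∑ n ∈ Finset.Icc m j, b n) * (∑ n ∈ Finset.Icc i (m - 1), a n)))|) := by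
  set A := ∑ n ∈ Icc i j, a n
  set B := ∑ n ∈ Icc i j, b n
  have hAB : 0 ≤ A * B :=
    mul_nonneg (sum_nonneg fun n hn ↦ (ha n hn).le) (sum_nonneg fun n hn ↦ (hb n hn).le)
  have hnum : (∑ n ∈ Icc i j, (n : ℝ) * a n) * B - (∑ n ∈ Icc i j, (n : ℝ) * b n) * A
      = ∑ m ∈ Icc (i + 1) j, ((∑ n ∈ Icc m j, a n) * B - (∑ n ∈ Icc m j, b n) * A) := by
    rw [sum_Icc_intCast_mul, sum_Icc_intCast_mul, sum_sub_distrib, ← sum_mul, ← sum_mul]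
    ring
  rw [hnum]
  refine (div_le_div_of_nonneg_right (abs_sum_le_sum_abs _ _) hAB).trans ?_
  rw [sum_div]
  refine sum_le_sum fun m hm ↦ ?_
  obtain ⟨him, hmj⟩ := mem_Icc.1 hm
  rw [show A = _ from sum_Icc_eq_sum_Icc_sub_one_add_sum_Icc a (by omega : i ≤ m) (by omega),
    show B = _ from sum_Icc_eq_sum_Icc_sub_one_add_sum_Icc b (by omega : i ≤ m) (by omega)]
  exact abs_sub_div_le_tanh_quarter_abs_log (sum_Icc_pos_of_subset ha (by omega) hmj le_rfl)
    (sum_Icc_pos_of_subset ha le_rfl (by omega) (by omega))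
    (sum_Icc_pos_of_subset hb (by omega) hmj le_rfl)
    (sum_Icc_pos_of_subset hb le_rfl (by omega) (by omega))

/-- an inequality for finite families of positive reals indexed by
consecutive integers `i ≤ n ≤ j`. -/
theorem stmt9 (i j : ℤ) (hij : i ≤ j) (a b : ℤ → ℝ)
    (ha : ∀ n ∈ Finset.Icc i j, 0 < a n) (hb : ∀ n ∈ Finset.Icc i j, 0 < b n) :
    |(∑ n ∈ Finset.Icc i j, (n : ℝ) * a n) * (∑ n ∈ Finset.Icc i j, b n) -
        (∑ n ∈ Finset.Icc i j, (n : ℝ) * b n) * (∑ n ∈ Finset.Icc i j, a n)| /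
      ((∑ n ∈ Finset.Icc i j, a n) * (∑ n ∈ Finset.Icc i j, b n))
      ≤ ∑ m ∈ Finset.Icc (i + 1) j,
          Real.tanh ((1 / 4) *
            |Real.log ((∑ n ∈ Finset.Icc m j, a n) * (∑ n ∈ Finset.Icc i (m - 1), b n) /
              ((∑ n ∈ Finset.Icc m j, b n) * (∑ n ∈ Finset.Icc i (m - 1), a n)))|) :=
  stmt9_general i j a b ha hb
end

section
/- Regard the steady-state probability π_k (given by the matrix-tree formula) as a function of a single off-diagonal rate W_ij > 0, all other rates held fixed. Then for every state k, |W_ij · dπ_k/dW_ij| ≤ π_k (1 - π_k); equivalently |∂π_k / ∂ ln W_ij| ≤ π_k(1-π_k). -/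
open Finset

attribute [local instance] Classical.propDecidable

/-!
With every rate but `W i j` frozen, each rooted spanning tree contains the directed edge
`j → i` at most once, so its weight is `a + b t` in `t = W i j` with `a, b ≥ 0`. Hence
`π_k(t) = N(t) / (N(t) + M(t))` for nonnegative affine `N` (trees rooted at `k`) and `M`
(trees rooted elsewhere), and `t π_k'(t) = t (b c - a d) / (N + M)²` while
`π_k (1 - π_k) = N M / (N + M)²`. Expanding `N M = a c + t (a d + b c) + b d t²` bounds
`|t (b c - a d)|` by `N M`.
-/

theorem abs_mul_sub_le_mul_add_mul {a b c d t : ℝ} (ha : 0 ≤ a) (hb : 0 ≤ b) (hc : 0 ≤ c)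
    (hd : 0 ≤ d) (ht : 0 ≤ t) :
    |t * (b * c - a * d)| ≤ (a + b * t) * (c + d * t) := by
  have hac := mul_nonneg ha hc
  have had := mul_nonneg (mul_nonneg ha hd) ht
  have hbc := mul_nonneg (mul_nonneg hb hc) ht
  have hbd := mul_nonneg (mul_nonneg hb hd) (mul_nonneg ht ht)
  exact abs_le.2 ⟨by nlinarith, by nlinarith⟩

theorem abs_mul_deriv_le_mul_one_sub {f : ℝ → ℝ} {a b c d t : ℝ} (ha : 0 ≤ a) (hb : 0 ≤ b)
    (hc : 0 ≤ c) (hd : 0 ≤ d) (ht : 0 < t)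
    (hf : ∀ s, f s = (a + b * s) / (a + b * s + (c + d * s))) :
    |t * deriv f t| ≤ f t * (1 - f t) := by
  set N := a + b * t
  set M := c + d * t
  by_cases hD : N + M = 0
  · -- then `f ≡ 0 / 0 = 0`
    have hzero : a = 0 ∧ b = 0 ∧ c = 0 ∧ d = 0 := by
      refine ⟨?_, ?_, ?_, ?_⟩ <;> nlinarith [mul_nonneg hb ht.le, mul_nonneg hd ht.le]
    obtain ⟨rfl, rfl, rfl, rfl⟩ := hzero
    have hf0 : f = fun _ => 0 := funext fun s => by simp [hf]
    simp [hf0]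
  have hderiv : HasDerivAt f ((b * (N + M) - N * (b + d)) / (N + M) ^ 2) t := by
    have hN : HasDerivAt (fun s => a + b * s) b t := by
      simpa using ((hasDerivAt_id t).const_mul b).const_add a
    have hNM : HasDerivAt (fun s => a + b * s + (c + d * s)) (b + d) t := by
      simpa using hN.fun_add (((hasDerivAt_id t).const_mul d).const_add c)
    rw [funext hf]
    exact hN.div hNM hD
  have hpos : 0 < N + M := lt_of_le_of_ne (by positivity) (Ne.symm hD)
  have hft : f t = N / (N + M) := hf t
  rw [hderiv.deriv, hft, one_sub_div hD, add_sub_cancel_left, div_mul_div_comm, ← sq,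
    mul_div_assoc', abs_div, abs_of_pos (pow_pos hpos 2)]
  refine div_le_div_of_nonneg_right ?_ (sq_nonneg _)
  calc |t * (b * (N + M) - N * (b + d))| = |t * (b * c - a * d)| := by
        simp only [N, M]; ring_nf
    _ ≤ N * M := abs_mul_sub_le_mul_add_mul ha hb hc hd ht.le

section

variable {V : Type*} [DecidableEq V]

def updateRate (W : V → V → ℝ) (i j : V) (t : ℝ) : V → V → ℝ :=
  fun a b => if a = i ∧ b = j then t else W a b

theorem updateRate_self (W : V → V → ℝ) (i j : V) : updateRate W i j (W i j) = W := by
  funext a b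
  by_cases h : a = i ∧ b = j
  · obtain ⟨rfl, rfl⟩ := h
    simp [updateRate]
  · simp [updateRate, h]

variable [Fintype V] {W : V → V → ℝ}

theorem exists_treeWeight_updateRate_eq (hoff : ∀ i j, i ≠ j → 0 ≤ W i j)
    (T : SimpleGraph V) (r i j : V) :
    ∃ a b : ℝ, 0 ≤ a ∧ 0 ≤ b ∧ ∀ t, treeWeight (updateRate W i j t) T r = a + b * t := by
  set S := Finset.univ.filter
    (fun p : V × V => T.Adj p.1 p.2 ∧ T.dist p.2 r + 1 = T.dist p.1 r)
  have hS : ∀ p ∈ S, 0 ≤ W p.2 p.1 := fun p hp => hoff _ _ (Finset.mem_filter.1 hp).2.1.ne'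
  have hother : ∀ t, ∀ p : V × V, p ≠ (j, i) → updateRate W i j t p.2 p.1 = W p.2 p.1 :=
    fun t p hp => if_neg fun h => hp (Prod.ext h.2 h.1)
  by_cases hji : (j, i) ∈ S
  · refine ⟨0, ∏ p ∈ S.erase (j, i), W p.2 p.1, le_rfl,
      Finset.prod_nonneg fun p hp => hS p (Finset.mem_of_mem_erase hp), fun t => ?_⟩
    rw [treeWeight, ← Finset.mul_prod_erase S _ hji,
      Finset.prod_congr rfl fun p hp => hother t p (Finset.ne_of_mem_erase hp)]
    simp [updateRate, mul_comm]
  · refine ⟨treeWeight W T r, 0, Finset.prod_nonneg hS, le_rfl, fun t => ?_⟩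
    rw [treeWeight, Finset.prod_congr rfl fun p hp => hother t p (ne_of_mem_of_not_mem hp hji)]
    simp [treeWeight, S]

theorem exists_sumTrees_updateRate_eq (hoff : ∀ i j, i ≠ j → 0 ≤ W i j)
    (G : SimpleGraph V) (r i j : V) :
    ∃ a b : ℝ, 0 ≤ a ∧ 0 ≤ b ∧ ∀ t, sumTrees (updateRate W i j t) G r = a + b * t := by
  choose a b ha hb h using fun T => exists_treeWeight_updateRate_eq hoff T r i j
  refine ⟨∑ T ∈ Finset.univ.filter (IsSpanningTree G), a T,
    ∑ T ∈ Finset.univ.filter (IsSpanningTree G), b T,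
    Finset.sum_nonneg fun T _ => ha T, Finset.sum_nonneg fun T _ => hb T, fun t => ?_⟩
  simp only [sumTrees, h, Finset.sum_add_distrib, Finset.sum_mul]

theorem exists_mttPi_updateRate_eq (hoff : ∀ i j, i ≠ j → 0 ≤ W i j)
    (G : SimpleGraph V) (i j k : V) :
    ∃ a b c d : ℝ, 0 ≤ a ∧ 0 ≤ b ∧ 0 ≤ c ∧ 0 ≤ d ∧ ∀ t,
      mttPi (updateRate W i j t) G k = (a + b * t) / (a + b * t + (c + d * t)) := by
  choose a b ha hb h using fun l => exists_sumTrees_updateRate_eq hoff G l i j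
  refine ⟨a k, b k, ∑ l ∈ Finset.univ.erase k, a l, ∑ l ∈ Finset.univ.erase k, b l, ha k, hb k,
    Finset.sum_nonneg fun l _ => ha l, Finset.sum_nonneg fun l _ => hb l, fun t => ?_⟩
  rw [mttPi, ← Finset.add_sum_erase _ _ (Finset.mem_univ k)]
  simp only [h, Finset.sum_add_distrib, Finset.sum_mul]

end

theorem stmt13_general {V : Type*} [Fintype V] [DecidableEq V] (W : V → V → ℝ)
    (hoff : ∀ i j, i ≠ j → 0 ≤ W i j)
    (i j : V) (hpos : 0 < W i j) (k : V) :
    |W i j *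
        deriv (fun t =>
          mttPi (fun a b => if a = i ∧ b = j then t else W a b) (transGraph W) k)
          (W i j)|
      ≤ mttPi W (transGraph W) k * (1 - mttPi W (transGraph W) k) := by
  obtain ⟨a, b, c, d, ha, hb, hc, hd, hπ⟩ := exists_mttPi_updateRate_eq hoff (transGraph W) i j k
  have h := abs_mul_deriv_le_mul_one_sub ha hb hc hd hpos hπ
  rwa [updateRate_self] at h

/-- the response of `π_k` to the scaling of a single
off-diagonal rate `W_ij` is bounded:
`|W_ij · dπ_k/dW_ij| ≤ π_k(1 - π_k)`. -/
theorem stmt13 {V : Type*} [Fintype V] [DecidableEq V] (W : V → V → ℝ)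
    (hoff : ∀ i j, i ≠ j → 0 ≤ W i j)
    (hsym : ∀ i j, i ≠ j → (0 < W i j ↔ 0 < W j i))
    (hconn : (transGraph W).Connected)
    (i j : V) (hij : i ≠ j) (hpos : 0 < W i j) (k : V) :
    |W i j *
        deriv (fun t =>
          mttPi (fun a b => if a = i ∧ b = j then t else W a b) (transGraph W) k)
          (W i j)|
      ≤ mttPi W (transGraph W) k * (1 - mttPi W (transGraph W) k) :=
  stmt13_general W hoff i j hpos k
end

section
/- For any positive real numbers a_0, a_1, b_0, b_1, one has |b_0 a_1 - a_0 b_1| / ((b_0 + b_1)(a_0 + a_1)) ≤ tanh( (1/4) |ln( (b_0 a_1)/(a_0 b_1) )| ). -/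
namespace Real

theorem tanh_nonneg {t : ℝ} (ht : 0 ≤ t) : 0 ≤ tanh t := by
  rw [tanh_eq_sinh_div_cosh]
  exact div_nonneg (sinh_nonneg_iff.2 ht) (cosh_pos t).le

theorem tanh_abs (t : ℝ) : tanh |t| = |tanh t| := by
  rcases le_total 0 t with ht | ht
  · rw [abs_of_nonneg ht, abs_of_nonneg (tanh_nonneg ht)]
  · have hneg := tanh_nonneg (neg_nonneg.2 ht)
    rw [tanh_neg] at hneg
    rw [abs_of_nonpos ht, tanh_neg, abs_of_nonpos (neg_nonneg.1 hneg)]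

theorem artanh_sub_div_add {s r : ℝ} (hs : 0 < s) (hr : 0 < r) :
    artanh ((s - r) / (s + r)) = log (s / r) / 2 := by
  have hq : (s - r) / (s + r) ∈ Set.Icc (-1) 1 := by
    constructor <;> [rw [le_div_iff₀ (by positivity)]; rw [div_le_iff₀ (by positivity)]] <;>
      linarith
  have hratio : (1 + (s - r) / (s + r)) / (1 - (s - r) / (s + r)) = s / r := by
    field_simp [hr.ne']
    ring
  rw [artanh_eq_half_log hq, hratio]
  ring

theorem tanh_quarter_abs_log_div {x y : ℝ} (hx : 0 < x) (hy : 0 < y) :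
    tanh (1 / 4 * |log (x / y)|) = |√x - √y| / (√x + √y) := by
  have hsx := sqrt_pos.2 hx
  have hsy := sqrt_pos.2 hy
  have hq : (√x - √y) / (√x + √y) ∈ Set.Ioo (-1) 1 := by
    constructor <;> [rw [lt_div_iff₀ (by positivity)]; rw [div_lt_iff₀ (by positivity)]] <;>
      linarith
  have hlog : 1 / 4 * |log (x / y)| = |artanh ((√x - √y) / (√x + √y))| := by
    rw [artanh_sub_div_add hsx hsy, ← sqrt_div' _ hy.le, log_sqrt (div_pos hx hy).le, abs_div,
      abs_div, abs_two]
    ring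
  rw [hlog, tanh_abs, tanh_artanh hq, abs_div, abs_of_pos (by positivity : 0 < √x + √y)]

theorem abs_sub_div_le_tanh_quarter_abs_log {x y D : ℝ} (hx : 0 < x) (hy : 0 < y)
    (hD : (√x + √y) ^ 2 ≤ D) : |x - y| / D ≤ tanh (1 / 4 * |log (x / y)|) := by
  have hsum : 0 < √x + √y := by positivity
  have hfactor : x - y = (√x - √y) * (√x + √y) := by
    linear_combination -sq_sqrt hx.le + sq_sqrt hy.le
  calc |x - y| / D ≤ |x - y| / (√x + √y) ^ 2 := by gcongr
    _ = |√x - √y| / (√x + √y) := by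
      rw [hfactor, abs_mul, abs_of_pos hsum]
      field_simp
    _ = tanh (1 / 4 * |log (x / y)|) := (tanh_quarter_abs_log_div hx hy).symm

theorem sqrt_mul_add_sqrt_mul_sq_le {a0 a1 b0 b1 : ℝ} (ha0 : 0 ≤ a0) (ha1 : 0 ≤ a1)
    (hb0 : 0 ≤ b0) (hb1 : 0 ≤ b1) :
    (√(b0 * a1) + √(a0 * b1)) ^ 2 ≤ (b0 + b1) * (a0 + a1) := by
  rw [sqrt_mul hb0, sqrt_mul ha0]
  nth_rw 2 [← sq_sqrt ha0, ← sq_sqrt ha1, ← sq_sqrt hb0, ← sq_sqrt hb1]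
  nlinarith [sq_nonneg (√b0 * √a0 - √b1 * √a1)]

end Real

/-- for positive reals `a₀, a₁, b₀, b₁`,
`|b₀a₁ - a₀b₁|/((b₀+b₁)(a₀+a₁)) ≤ tanh((1/4)|ln((b₀a₁)/(a₀b₁))|)`. -/
theorem stmt16 (a0 a1 b0 b1 : ℝ) (ha0 : 0 < a0) (ha1 : 0 < a1)
    (hb0 : 0 < b0) (hb1 : 0 < b1) :
    |b0 * a1 - a0 * b1| / ((b0 + b1) * (a0 + a1))
      ≤ Real.tanh ((1 / 4) * |Real.log (b0 * a1 / (a0 * b1))|) :=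
  Real.abs_sub_div_le_tanh_quarter_abs_log (by positivity) (by positivity)
    (Real.sqrt_mul_add_sqrt_mul_sq_le ha0.le ha1.le hb0.le hb1.le)
end
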